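/- arXiv:1709.06601 — 2 statements merged into one kernel-verified Lean document; each statement's English description precedes it below -/
import Mathlib

section
/- Let P, Q, U, V ∈ ℝ³ with P·U = 0 and Q·V = 0, let c ∈ ℝ, and let M = M(P,Q,U,V,c). Then a real number λ is an eigenvalue of M (i.e. det(M − λI) = 0) if and only if λ = c − (α‖P‖‖Q‖ + β‖U‖‖V‖) for some α, β ∈ {−1, 1}. -/
open Matrix


/-- Squared-sum Euclidean norm on `ℝ³` (represented as `Fin 3 → ℝ`). -/
noncomputable def norm3 (v : Fin 3 → ℝ) : ℝ := Real.sqrt (v 0 ^ 2 + v 1 ^ 2 + v 2 ^ 2)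

/-- Dot product on `ℝ³`. -/
def dot3 (u v : Fin 3 → ℝ) : ℝ := u 0 * v 0 + u 1 * v 1 + u 2 * v 2

/-- Cross product on `ℝ³`. -/
def cross3 (u v : Fin 3 → ℝ) : Fin 3 → ℝ :=
  ![u 1 * v 2 - u 2 * v 1, u 2 * v 0 - u 0 * v 2, u 0 * v 1 - u 1 * v 0]

/-- The symmetric matrix `M(P,Q,U,V,c)` of the quadratic form associated with a
general predicate.  Components are indexed `1,2,3` in the paper and `0,1,2` here. -/
noncomputable def Mmat (P Q U V : Fin 3 → ℝ) (c : ℝ) : Matrix (Fin 4) (Fin 4) ℝ :=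
  let R : Fin 3 → ℝ := cross3 P Q + cross3 U V
  let T : ℝ := dot3 P Q + dot3 U V
  !![2*(P 2 * Q 2 + U 2 * V 2) - T + c, 2*(P 0 * Q 2 + U 0 * V 2) + R 1,
       2*(P 2 * Q 1 + U 2 * V 1) + R 0, R 2;
     2*(P 0 * Q 2 + U 0 * V 2) + R 1, 2*(P 0 * Q 0 + U 0 * V 0) - T + c,
       2*(P 1 * Q 0 + U 1 * V 0) + R 2, R 0;
     2*(P 2 * Q 1 + U 2 * V 1) + R 0, 2*(P 1 * Q 0 + U 1 * V 0) + R 2,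
       2*(P 1 * Q 1 + U 1 * V 1) - T + c, R 1;
     R 2, R 0, R 1, T + c]


lemma my_det_fin_four (A : Matrix (Fin 4) (Fin 4) ℝ) :
    A.det =
      A 0 0 * (A 1 1 * (A 2 2 * A 3 3 - A 2 3 * A 3 2) - A 1 2 * (A 2 1 * A 3 3 - A 2 3 * A 3 1)
        + A 1 3 * (A 2 1 * A 3 2 - A 2 2 * A 3 1))
      - A 0 1 * (A 1 0 * (A 2 2 * A 3 3 - A 2 3 * A 3 2) - A 1 2 * (A 2 0 * A 3 3 - A 2 3 * A 3 0)
        + A 1 3 * (A 2 0 * A 3 2 - A 2 2 * A 3 0))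
      + A 0 2 * (A 1 0 * (A 2 1 * A 3 3 - A 2 3 * A 3 1) - A 1 1 * (A 2 0 * A 3 3 - A 2 3 * A 3 0)
        + A 1 3 * (A 2 0 * A 3 1 - A 2 1 * A 3 0))
      - A 0 3 * (A 1 0 * (A 2 1 * A 3 2 - A 2 2 * A 3 1) - A 1 1 * (A 2 0 * A 3 2 - A 2 2 * A 3 0)
        + A 1 2 * (A 2 0 * A 3 1 - A 2 1 * A 3 0)) := by
  rw [Matrix.det_succ_row_zero]
  simp [Fin.sum_univ_succ, Matrix.det_fin_three, Matrix.submatrix_apply,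
    show (Fin.succ 2 : Fin 4) = 3 from rfl, show Fin.succAbove 2 2 = (3 : Fin 4) from rfl,
    show Fin.castSucc 2 = (2 : Fin 4) from rfl, show Fin.succAbove 1 2 = (3 : Fin 4) from rfl,
    show Fin.succAbove 3 2 = (2 : Fin 4) from rfl, show Fin.succAbove 0 2 = (3 : Fin 4) from rfl]
  ring

set_option maxHeartbeats 2000000 in
set_option maxRecDepth 40000 in
lemma det_eq (P Q U V : Fin 3 → ℝ) (hPU : dot3 P U = 0) (hQV : dot3 Q V = 0)
    (c lam : ℝ) :
    (Mmat P Q U V c - lam • (1 : Matrix (Fin 4) (Fin 4) ℝ)).det =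
      ((c - lam)^2)^2
        - 2 * (c - lam)^2 *
            ((P 0^2 + P 1^2 + P 2^2) * (Q 0^2 + Q 1^2 + Q 2^2)
              + (U 0^2 + U 1^2 + U 2^2) * (V 0^2 + V 1^2 + V 2^2))
        + ((P 0^2 + P 1^2 + P 2^2) * (Q 0^2 + Q 1^2 + Q 2^2)
            - (U 0^2 + U 1^2 + U 2^2) * (V 0^2 + V 1^2 + V 2^2))^2 := by
  simp only [dot3] at hPU hQV
  rw [my_det_fin_four]
  simp (config := { maxSteps := 10000000 }) [Mmat, cross3, dot3, Matrix.one_apply]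
  linear_combination ((-4)*Q 2*V 2*lam^2 + (8)*Q 2*V 2*c*lam + (-4)*Q 2*V 2*c^2 + (4)*Q 2*U 2^2*V 2^3 + (4)*Q 2*U 2^2*V 1^2*V 2 + (4)*Q 2*U 2^2*V 0^2*V 2 + (4)*Q 2*U 1^2*V 2^3 + (4)*Q 2*U 1^2*V 1^2*V 2 + (4)*Q 2*U 1^2*V 0^2*V 2 + (4)*Q 2*U 0^2*V 2^3 + (4)*Q 2*U 0^2*V 1^2*V 2 + (4)*Q 2*U 0^2*V 0^2*V 2 + (-4)*Q 1*V 1*lam^2 + (8)*Q 1*V 1*c*lam + (-4)*Q 1*V 1*c^2 + (4)*Q 1*U 2^2*V 1*V 2^2 + (4)*Q 1*U 2^2*V 1^3 + (4)*Q 1*U 2^2*V 0^2*V 1 + (4)*Q 1*U 1^2*V 1*V 2^2 + (4)*Q 1*U 1^2*V 1^3 + (4)*Q 1*U 1^2*V 0^2*V 1 + (4)*Q 1*U 0^2*V 1*V 2^2 + (4)*Q 1*U 0^2*V 1^3 + (4)*Q 1*U 0^2*V 0^2*V 1 + (-4)*Q 0*V 0*lam^2 + (8)*Q 0*V 0*c*lam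 + (-4)*Q 0*V 0*c^2 + (4)*Q 0*U 2^2*V 0*V 2^2 + (4)*Q 0*U 2^2*V 0*V 1^2 + (4)*Q 0*U 2^2*V 0^3 + (4)*Q 0*U 1^2*V 0*V 2^2 + (4)*Q 0*U 1^2*V 0*V 1^2 + (4)*Q 0*U 1^2*V 0^3 + (4)*Q 0*U 0^2*V 0*V 2^2 + (4)*Q 0*U 0^2*V 0*V 1^2 + (4)*Q 0*U 0^2*V 0^3 + (4)*P 2*Q 2^2*U 2*V 1^2 + (4)*P 2*Q 2^2*U 2*V 0^2 + (-8)*P 2*Q 1*Q 2*U 2*V 1*V 2 + (4)*P 2*Q 1^2*U 2*V 2^2 + (4)*P 2*Q 1^2*U 2*V 0^2 + (-8)*P 2*Q 0*Q 2*U 2*V 0*V 2 + (-8)*P 2*Q 0*Q 1*U 2*V 0*V 1 + (4)*P 2*Q 0^2*U 2*V 2^2 + (4)*P 2*Q 0^2*U 2*V 1^2 + (4)*P 2^2*Q 2^3*V 2 + (4)*P 2^2*Q 1*Q 2^2*V 1 + (4)*P 2^2*Q 1^2*Q 2*V 2 + (4)*P 2^2*Q 1^3*V 1 + (4)*P 2^2*Q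 0*Q 2^2*V 0 + (4)*P 2^2*Q 0*Q 1^2*V 0 + (4)*P 2^2*Q 0^2*Q 2*V 2 + (4)*P 2^2*Q 0^2*Q 1*V 1 + (4)*P 2^2*Q 0^3*V 0 + (4)*P 1*Q 2^2*U 1*V 1^2 + (4)*P 1*Q 2^2*U 1*V 0^2 + (-8)*P 1*Q 1*Q 2*U 1*V 1*V 2 + (4)*P 1*Q 1^2*U 1*V 2^2 + (4)*P 1*Q 1^2*U 1*V 0^2 + (-8)*P 1*Q 0*Q 2*U 1*V 0*V 2 + (-8)*P 1*Q 0*Q 1*U 1*V 0*V 1 + (4)*P 1*Q 0^2*U 1*V 2^2 + (4)*P 1*Q 0^2*U 1*V 1^2 + (4)*P 1^2*Q 2^3*V 2 + (4)*P 1^2*Q 1*Q 2^2*V 1 + (4)*P 1^2*Q 1^2*Q 2*V 2 + (4)*P 1^2*Q 1^3*V 1 + (4)*P 1^2*Q 0*Q 2^2*V 0 + (4)*P 1^2*Q 0*Q 1^2*V 0 + (4)*P 1^2*Q 0^2*Q 2*V 2 + (4)*P 1^2*Q 0^2*Q 1*V 1 + (4)*P 1^2*Q 0^3*V 0 + (8)*P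 0*Q 2^2*U 0*V 2^2 + (4)*P 0*Q 2^2*U 0*V 1^2 + (4)*P 0*Q 2^2*U 0*V 0^2 + (8)*P 0*Q 1*Q 2*U 0*V 1*V 2 + (4)*P 0*Q 1^2*U 0*V 2^2 + (8)*P 0*Q 1^2*U 0*V 1^2 + (4)*P 0*Q 1^2*U 0*V 0^2 + (8)*P 0*Q 0*Q 2*U 0*V 0*V 2 + (8)*P 0*Q 0*Q 1*U 0*V 0*V 1 + (4)*P 0*Q 0^2*U 0*V 2^2 + (4)*P 0*Q 0^2*U 0*V 1^2 + (8)*P 0*Q 0^2*U 0*V 0^2 + (4)*P 0^2*Q 2^3*V 2 + (4)*P 0^2*Q 1*Q 2^2*V 1 + (4)*P 0^2*Q 1^2*Q 2*V 2 + (4)*P 0^2*Q 1^3*V 1 + (4)*P 0^2*Q 0*Q 2^2*V 0 + (4)*P 0^2*Q 0*Q 1^2*V 0 + (4)*P 0^2*Q 0^2*Q 2*V 2 + (4)*P 0^2*Q 0^2*Q 1*V 1 + (4)*P 0^2*Q 0^3*V 0) * hPU + ((8)*P 2^2*Q 2*U 2^2*V 2 + (4)*P 2^2*Q 2*U 1^2*V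 2 + (4)*P 2^2*Q 2*U 0^2*V 2 + (8)*P 2^2*Q 1*U 2^2*V 1 + (4)*P 2^2*Q 1*U 1^2*V 1 + (4)*P 2^2*Q 1*U 0^2*V 1 + (8)*P 2^2*Q 0*U 2^2*V 0 + (4)*P 2^2*Q 0*U 1^2*V 0 + (4)*P 2^2*Q 0*U 0^2*V 0 + (8)*P 1*P 2*Q 2*U 1*U 2*V 2 + (8)*P 1*P 2*Q 1*U 1*U 2*V 1 + (8)*P 1*P 2*Q 0*U 1*U 2*V 0 + (4)*P 1^2*Q 2*U 2^2*V 2 + (8)*P 1^2*Q 2*U 1^2*V 2 + (4)*P 1^2*Q 2*U 0^2*V 2 + (4)*P 1^2*Q 1*U 2^2*V 1 + (8)*P 1^2*Q 1*U 1^2*V 1 + (4)*P 1^2*Q 1*U 0^2*V 1 + (4)*P 1^2*Q 0*U 2^2*V 0 + (8)*P 1^2*Q 0*U 1^2*V 0 + (4)*P 1^2*Q 0*U 0^2*V 0 + (4)*P 0^2*Q 2*U 2^2*V 2 + (4)*P 0^2*Q 2*U 1^2*V 2 + (4)*P 0^2*Q 1*U 2^2*V 1 + (4)*P 0^2*Q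 1*U 1^2*V 1 + (4)*P 0^2*Q 0*U 2^2*V 0 + (4)*P 0^2*Q 0*U 1^2*V 0) * hQV

/-- with `P·U = 0` and `Q·V = 0`, a real `λ` is an eigenvalue of
`M(P,Q,U,V,c)` iff `λ = c − (α‖P‖‖Q‖ + β‖U‖‖V‖)` for some `α, β ∈ {−1, 1}`. -/
theorem statement2 (P Q U V : Fin 3 → ℝ) (hPU : dot3 P U = 0) (hQV : dot3 Q V = 0)
    (c lam : ℝ) :
    (Mmat P Q U V c - lam • (1 : Matrix (Fin 4) (Fin 4) ℝ)).det = 0 ↔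
      ∃ α ∈ ({-1, 1} : Set ℝ), ∃ β ∈ ({-1, 1} : Set ℝ),
        lam = c - (α * (norm3 P * norm3 Q) + β * (norm3 U * norm3 V)) := by
  have hP : norm3 P ^ 2 = P 0 ^ 2 + P 1 ^ 2 + P 2 ^ 2 := Real.sq_sqrt (by positivity)
  have hQ : norm3 Q ^ 2 = Q 0 ^ 2 + Q 1 ^ 2 + Q 2 ^ 2 := Real.sq_sqrt (by positivity)
  have hU : norm3 U ^ 2 = U 0 ^ 2 + U 1 ^ 2 + U 2 ^ 2 := Real.sq_sqrt (by positivity)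
  have hV : norm3 V ^ 2 = V 0 ^ 2 + V 1 ^ 2 + V 2 ^ 2 := Real.sq_sqrt (by positivity)
  set a := norm3 P * norm3 Q with ha
  set b := norm3 U * norm3 V with hb
  have ha2 : a ^ 2 = (P 0 ^ 2 + P 1 ^ 2 + P 2 ^ 2) * (Q 0 ^ 2 + Q 1 ^ 2 + Q 2 ^ 2) := by
    rw [ha, mul_pow, hP, hQ]
  have hb2 : b ^ 2 = (U 0 ^ 2 + U 1 ^ 2 + U 2 ^ 2) * (V 0 ^ 2 + V 1 ^ 2 + V 2 ^ 2) := by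
    rw [hb, mul_pow, hU, hV]
  rw [det_eq P Q U V hPU hQV c lam, ← ha2, ← hb2]
  have hfac : ((c - lam) ^ 2) ^ 2 - 2 * (c - lam) ^ 2 * (a ^ 2 + b ^ 2) + (a ^ 2 - b ^ 2) ^ 2
      = (lam - (c - (a + b))) * (lam - (c - (-a - b)))
        * ((lam - (c - (a - b))) * (lam - (c - (-a + b)))) := by ring
  rw [hfac]
  constructor
  · intro h
    rcases mul_eq_zero.mp h with h | h
    · rcases mul_eq_zero.mp h with h | h
      · exact ⟨1, by norm_num, 1, by norm_num, by rw [sub_eq_zero] at h; linarith⟩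
      · exact ⟨-1, by norm_num, -1, by norm_num, by rw [sub_eq_zero] at h; linarith⟩
    · rcases mul_eq_zero.mp h with h | h
      · exact ⟨1, by norm_num, -1, by norm_num, by rw [sub_eq_zero] at h; linarith⟩
      · exact ⟨-1, by norm_num, 1, by norm_num, by rw [sub_eq_zero] at h; linarith⟩
  · rintro ⟨α, hα, β, hβ, rfl⟩
    simp only [Set.mem_insert_iff, Set.mem_singleton_iff] at hα hβ
    rcases hα with rfl | rfl <;> rcases hβ with rfl | rfl <;> ring
end

section
/- Let P, Q, U, V ∈ ℝ³ with P·U = 0 and Q·V = 0, and let c ∈ ℝ. If the general predicate is proper, i.e. ‖P‖‖Q‖ ≠ 0 or ‖U‖‖V‖ ≠ 0, then the matrix M(P,Q,U,V,c) has at least one non-zero eigenvalue; equivalently, not all four numbers c − (α‖P‖‖Q‖ + β‖U‖‖V‖), α, β ∈ {−1,1}, are zero. -/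
open Matrix

lemma det_fin_four' (A : Matrix (Fin 4) (Fin 4) ℝ) :
    A.det = A 0 0*A 1 1*A 2 2*A 3 3 - A 0 0*A 1 1*A 2 3*A 3 2 - A 0 0*A 1 2*A 2 1*A 3 3 + A 0 0*A 1 2*A 2 3*A 3 1 + A 0 0*A 1 3*A 2 1*A 3 2 - A 0 0*A 1 3*A 2 2*A 3 1 - A 0 1*A 1 0*A 2 2*A 3 3 + A 0 1*A 1 0*A 2 3*A 3 2 + A 0 1*A 1 2*A 2 0*A 3 3 - A 0 1*A 1 2*A 2 3*A 3 0 - A 0 1*A 1 3*A 2 0*A 3 2 + A 0 1*A 1 3*A 2 2*A 3 0 + A 0 2*A 1 0*A 2 1*A 3 3 - A 0 2*A 1 0*A 2 3*A 3 1 - A 0 2*A 1 1*A 2 0*A 3 3 + A 0 2*A 1 1*A 2 3*A 3 0 + A 0 2*A 1 3*A 2 0*A 3 1 - A 0 2*A 1 3*A 2 1*A 3 0 - A 0 3*A 1 0*A 2 1*A 3 2 + A 0 3*A 1 0*A 2 2*A 3 1 + A 0 3*A 1 1*A 2 0*A 3 2 - A 0 3*A 1 1*A 2 2*A 3 0 -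 A 0 3*A 1 2*A 2 0*A 3 1 + A 0 3*A 1 2*A 2 1*A 3 0 := by
  rw [Matrix.det_succ_row_zero]
  simp [Fin.sum_univ_succ, Matrix.det_fin_three,
    show ((2:Fin 3).succ : Fin 4) = 3 from rfl,
    show (Fin.succAbove (2:Fin 4) 2 : Fin 4) = 3 from rfl,
    show (Fin.succAbove (1:Fin 4) 2 : Fin 4) = 3 from rfl,
    show (Fin.castSucc (2:Fin 3) : Fin 4) = 2 from rfl,
    show (Fin.succAbove (3:Fin 4) 2 : Fin 4) = 2 from rfl]
  ring

lemma norm3_nonneg (v : Fin 3 → ℝ) : 0 ≤ norm3 v := Real.sqrt_nonneg _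

lemma norm3_sq (v : Fin 3 → ℝ) : norm3 v ^ 2 = v 0 ^ 2 + v 1 ^ 2 + v 2 ^ 2 := by
  rw [norm3, Real.sq_sqrt]; positivity

set_option maxRecDepth 16000 in
set_option maxHeartbeats 2000000 in
lemma key_det (P Q U V : Fin 3 → ℝ) (hPU : dot3 P U = 0) (hQV : dot3 Q V = 0)
    (c lam : ℝ) :
    (Mmat P Q U V c - lam • (1 : Matrix (Fin 4) (Fin 4) ℝ)).det =
      (c - lam)^4
        - 2*(c - lam)^2 * ((P 0^2+P 1^2+P 2^2)*(Q 0^2+Q 1^2+Q 2^2)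
            + (U 0^2+U 1^2+U 2^2)*(V 0^2+V 1^2+V 2^2))
        + ((P 0^2+P 1^2+P 2^2)*(Q 0^2+Q 1^2+Q 2^2)
            - (U 0^2+U 1^2+U 2^2)*(V 0^2+V 1^2+V 2^2))^2 := by
  simp only [dot3] at hPU hQV
  have h00 : (Mmat P Q U V c - lam • (1 : Matrix (Fin 4) (Fin 4) ℝ)) 0 0 = (-1)*lam + c + U 2*V 2 + (-1)*U 1*V 1 + (-1)*U 0*V 0 + P 2*Q 2 + (-1)*P 1*Q 1 + (-1)*P 0*Q 0 := by
    simp [Mmat, cross3, dot3, Matrix.one_apply]; ring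
  have h01 : (Mmat P Q U V c - lam • (1 : Matrix (Fin 4) (Fin 4) ℝ)) 0 1 = U 2*V 0 + U 0*V 2 + P 2*Q 0 + P 0*Q 2 := by
    simp [Mmat, cross3, dot3, Matrix.one_apply]; ring
  have h02 : (Mmat P Q U V c - lam • (1 : Matrix (Fin 4) (Fin 4) ℝ)) 0 2 = U 2*V 1 + U 1*V 2 + P 2*Q 1 + P 1*Q 2 := by
    simp [Mmat, cross3, dot3, Matrix.one_apply]; ring
  have h03 : (Mmat P Q U V c - lam • (1 : Matrix (Fin 4) (Fin 4) ℝ)) 0 3 = (-1)*U 1*V 0 + U 0*V 1 + (-1)*P 1*Q 0 + P 0*Q 1 := by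
    simp [Mmat, cross3, dot3, Matrix.one_apply]; ring
  have h10 : (Mmat P Q U V c - lam • (1 : Matrix (Fin 4) (Fin 4) ℝ)) 1 0 = U 2*V 0 + U 0*V 2 + P 2*Q 0 + P 0*Q 2 := by
    simp [Mmat, cross3, dot3, Matrix.one_apply]; ring
  have h11 : (Mmat P Q U V c - lam • (1 : Matrix (Fin 4) (Fin 4) ℝ)) 1 1 = (-1)*lam + c + (-1)*U 2*V 2 + (-1)*U 1*V 1 + U 0*V 0 + (-1)*P 2*Q 2 + (-1)*P 1*Q 1 + P 0*Q 0 := by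
    simp [Mmat, cross3, dot3, Matrix.one_apply]; ring
  have h12 : (Mmat P Q U V c - lam • (1 : Matrix (Fin 4) (Fin 4) ℝ)) 1 2 = U 1*V 0 + U 0*V 1 + P 1*Q 0 + P 0*Q 1 := by
    simp [Mmat, cross3, dot3, Matrix.one_apply]; ring
  have h13 : (Mmat P Q U V c - lam • (1 : Matrix (Fin 4) (Fin 4) ℝ)) 1 3 = (-1)*U 2*V 1 + U 1*V 2 + (-1)*P 2*Q 1 + P 1*Q 2 := by
    simp [Mmat, cross3, dot3, Matrix.one_apply]; ring
  have h20 : (Mmat P Q U V c - lam • (1 : Matrix (Fin 4) (Fin 4) ℝ)) 2 0 = U 2*V 1 + U 1*V 2 + P 2*Q 1 + P 1*Q 2 := by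
    simp [Mmat, cross3, dot3, Matrix.one_apply]; ring
  have h21 : (Mmat P Q U V c - lam • (1 : Matrix (Fin 4) (Fin 4) ℝ)) 2 1 = U 1*V 0 + U 0*V 1 + P 1*Q 0 + P 0*Q 1 := by
    simp [Mmat, cross3, dot3, Matrix.one_apply]; ring
  have h22 : (Mmat P Q U V c - lam • (1 : Matrix (Fin 4) (Fin 4) ℝ)) 2 2 = (-1)*lam + c + (-1)*U 2*V 2 + U 1*V 1 + (-1)*U 0*V 0 + (-1)*P 2*Q 2 + P 1*Q 1 + (-1)*P 0*Q 0 := by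
    simp [Mmat, cross3, dot3, Matrix.one_apply]; ring
  have h23 : (Mmat P Q U V c - lam • (1 : Matrix (Fin 4) (Fin 4) ℝ)) 2 3 = U 2*V 0 + (-1)*U 0*V 2 + P 2*Q 0 + (-1)*P 0*Q 2 := by
    simp [Mmat, cross3, dot3, Matrix.one_apply]; ring
  have h30 : (Mmat P Q U V c - lam • (1 : Matrix (Fin 4) (Fin 4) ℝ)) 3 0 = (-1)*U 1*V 0 + U 0*V 1 + (-1)*P 1*Q 0 + P 0*Q 1 := by
    simp [Mmat, cross3, dot3, Matrix.one_apply]; ring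
  have h31 : (Mmat P Q U V c - lam • (1 : Matrix (Fin 4) (Fin 4) ℝ)) 3 1 = (-1)*U 2*V 1 + U 1*V 2 + (-1)*P 2*Q 1 + P 1*Q 2 := by
    simp [Mmat, cross3, dot3, Matrix.one_apply]; ring
  have h32 : (Mmat P Q U V c - lam • (1 : Matrix (Fin 4) (Fin 4) ℝ)) 3 2 = U 2*V 0 + (-1)*U 0*V 2 + P 2*Q 0 + (-1)*P 0*Q 2 := by
    simp [Mmat, cross3, dot3, Matrix.one_apply]; ring
  have h33 : (Mmat P Q U V c - lam • (1 : Matrix (Fin 4) (Fin 4) ℝ)) 3 3 = (-1)*lam + c + U 2*V 2 + U 1*V 1 + U 0*V 0 + P 2*Q 2 + P 1*Q 1 + P 0*Q 0 := by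
    simp [Mmat, cross3, dot3, Matrix.one_apply]; ring

  rw [det_fin_four', h00, h01, h02, h03, h10, h11, h12, h13, h20, h21, h22, h23, h30, h31, h32, h33]
  linear_combination ((-4)*Q 2*V 2*lam*lam + 8*Q 2*V 2*c*lam + (-4)*Q 2*V 2*c*c + 4*Q 2*U 2*U 2*V 2*V 2*V 2 + 4*Q 2*U 2*U 2*V 1*V 1*V 2 + 4*Q 2*U 2*U 2*V 0*V 0*V 2 + 4*Q 2*U 1*U 1*V 2*V 2*V 2 + 4*Q 2*U 1*U 1*V 1*V 1*V 2 + 4*Q 2*U 1*U 1*V 0*V 0*V 2 + 4*Q 2*U 0*U 0*V 2*V 2*V 2 + 4*Q 2*U 0*U 0*V 1*V 1*V 2 + 4*Q 2*U 0*U 0*V 0*V 0*V 2 + (-4)*Q 1*V 1*lam*lam + 8*Q 1*V 1*c*lam + (-4)*Q 1*V 1*c*c + 4*Q 1*U 2*U 2*V 1*V 2*V 2 + 4*Q 1*U 2*U 2*V 1*V 1*V 1 + 4*Q 1*U 2*U 2*V 0*V 0*V 1 + 4*Q 1*U 1*U 1*V 1*V 2*V 2 + 4*Q 1*U 1*U 1*V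 1*V 1*V 1 + 4*Q 1*U 1*U 1*V 0*V 0*V 1 + 4*Q 1*U 0*U 0*V 1*V 2*V 2 + 4*Q 1*U 0*U 0*V 1*V 1*V 1 + 4*Q 1*U 0*U 0*V 0*V 0*V 1 + (-4)*Q 0*V 0*lam*lam + 8*Q 0*V 0*c*lam + (-4)*Q 0*V 0*c*c + 4*Q 0*U 2*U 2*V 0*V 2*V 2 + 4*Q 0*U 2*U 2*V 0*V 1*V 1 + 4*Q 0*U 2*U 2*V 0*V 0*V 0 + 4*Q 0*U 1*U 1*V 0*V 2*V 2 + 4*Q 0*U 1*U 1*V 0*V 1*V 1 + 4*Q 0*U 1*U 1*V 0*V 0*V 0 + 4*Q 0*U 0*U 0*V 0*V 2*V 2 + 4*Q 0*U 0*U 0*V 0*V 1*V 1 + 4*Q 0*U 0*U 0*V 0*V 0*V 0 + 4*P 2*Q 2*Q 2*U 2*V 1*V 1 + 4*P 2*Q 2*Q 2*U 2*V 0*V 0 + (-8)*P 2*Q 1*Q 2*U 2*V 1*V 2 + 4*P 2*Q 1*Q 1*U 2*V 2*V 2 + 4*P 2*Q 1*Q 1*U 2*V 0*V 0 + (-8)*P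 2*Q 0*Q 2*U 2*V 0*V 2 + (-8)*P 2*Q 0*Q 1*U 2*V 0*V 1 + 4*P 2*Q 0*Q 0*U 2*V 2*V 2 + 4*P 2*Q 0*Q 0*U 2*V 1*V 1 + 4*P 2*P 2*Q 2*Q 2*Q 2*V 2 + 4*P 2*P 2*Q 1*Q 2*Q 2*V 1 + 4*P 2*P 2*Q 1*Q 1*Q 2*V 2 + 4*P 2*P 2*Q 1*Q 1*Q 1*V 1 + 4*P 2*P 2*Q 0*Q 2*Q 2*V 0 + 4*P 2*P 2*Q 0*Q 1*Q 1*V 0 + 4*P 2*P 2*Q 0*Q 0*Q 2*V 2 + 4*P 2*P 2*Q 0*Q 0*Q 1*V 1 + 4*P 2*P 2*Q 0*Q 0*Q 0*V 0 + 4*P 1*Q 2*Q 2*U 1*V 1*V 1 + 4*P 1*Q 2*Q 2*U 1*V 0*V 0 + (-8)*P 1*Q 1*Q 2*U 1*V 1*V 2 + 4*P 1*Q 1*Q 1*U 1*V 2*V 2 + 4*P 1*Q 1*Q 1*U 1*V 0*V 0 + (-8)*P 1*Q 0*Q 2*U 1*V 0*V 2 + (-8)*P 1*Q 0*Q 1*U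 1*V 0*V 1 + 4*P 1*Q 0*Q 0*U 1*V 2*V 2 + 4*P 1*Q 0*Q 0*U 1*V 1*V 1 + 4*P 1*P 1*Q 2*Q 2*Q 2*V 2 + 4*P 1*P 1*Q 1*Q 2*Q 2*V 1 + 4*P 1*P 1*Q 1*Q 1*Q 2*V 2 + 4*P 1*P 1*Q 1*Q 1*Q 1*V 1 + 4*P 1*P 1*Q 0*Q 2*Q 2*V 0 + 4*P 1*P 1*Q 0*Q 1*Q 1*V 0 + 4*P 1*P 1*Q 0*Q 0*Q 2*V 2 + 4*P 1*P 1*Q 0*Q 0*Q 1*V 1 + 4*P 1*P 1*Q 0*Q 0*Q 0*V 0 + 8*P 0*Q 2*Q 2*U 0*V 2*V 2 + 4*P 0*Q 2*Q 2*U 0*V 1*V 1 + 4*P 0*Q 2*Q 2*U 0*V 0*V 0 + 8*P 0*Q 1*Q 2*U 0*V 1*V 2 + 4*P 0*Q 1*Q 1*U 0*V 2*V 2 + 8*P 0*Q 1*Q 1*U 0*V 1*V 1 + 4*P 0*Q 1*Q 1*U 0*V 0*V 0 + 8*P 0*Q 0*Q 2*U 0*V 0*V 2 + 8*P 0*Q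 0*Q 1*U 0*V 0*V 1 + 4*P 0*Q 0*Q 0*U 0*V 2*V 2 + 4*P 0*Q 0*Q 0*U 0*V 1*V 1 + 8*P 0*Q 0*Q 0*U 0*V 0*V 0 + 4*P 0*P 0*Q 2*Q 2*Q 2*V 2 + 4*P 0*P 0*Q 1*Q 2*Q 2*V 1 + 4*P 0*P 0*Q 1*Q 1*Q 2*V 2 + 4*P 0*P 0*Q 1*Q 1*Q 1*V 1 + 4*P 0*P 0*Q 0*Q 2*Q 2*V 0 + 4*P 0*P 0*Q 0*Q 1*Q 1*V 0 + 4*P 0*P 0*Q 0*Q 0*Q 2*V 2 + 4*P 0*P 0*Q 0*Q 0*Q 1*V 1 + 4*P 0*P 0*Q 0*Q 0*Q 0*V 0) * hPU + (8*P 2*P 2*Q 2*U 2*U 2*V 2 + 4*P 2*P 2*Q 2*U 1*U 1*V 2 + 4*P 2*P 2*Q 2*U 0*U 0*V 2 + 8*P 2*P 2*Q 1*U 2*U 2*V 1 + 4*P 2*P 2*Q 1*U 1*U 1*V 1 + 4*P 2*P 2*Q 1*U 0*U 0*V 1 + 8*P 2*P 2*Q 0*U 2*U 2*V 0 + 4*P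 2*P 2*Q 0*U 1*U 1*V 0 + 4*P 2*P 2*Q 0*U 0*U 0*V 0 + 8*P 1*P 2*Q 2*U 1*U 2*V 2 + 8*P 1*P 2*Q 1*U 1*U 2*V 1 + 8*P 1*P 2*Q 0*U 1*U 2*V 0 + 4*P 1*P 1*Q 2*U 2*U 2*V 2 + 8*P 1*P 1*Q 2*U 1*U 1*V 2 + 4*P 1*P 1*Q 2*U 0*U 0*V 2 + 4*P 1*P 1*Q 1*U 2*U 2*V 1 + 8*P 1*P 1*Q 1*U 1*U 1*V 1 + 4*P 1*P 1*Q 1*U 0*U 0*V 1 + 4*P 1*P 1*Q 0*U 2*U 2*V 0 + 8*P 1*P 1*Q 0*U 1*U 1*V 0 + 4*P 1*P 1*Q 0*U 0*U 0*V 0 + 4*P 0*P 0*Q 2*U 2*U 2*V 2 + 4*P 0*P 0*Q 2*U 1*U 1*V 2 + 4*P 0*P 0*Q 1*U 2*U 2*V 1 + 4*P 0*P 0*Q 1*U 1*U 1*V 1 + 4*P 0*P 0*Q 0*U 2*U 2*V 0 + 4*P 0*P 0*Q 0*U 1*U 1*V 0) * hQV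

/-- a proper general predicate (`‖P‖‖Q‖ ≠ 0` or `‖U‖‖V‖ ≠ 0`) has at least
one non-zero eigenvalue of `M(P,Q,U,V,c)`; equivalently, not all four numbers
`c − (α‖P‖‖Q‖ + β‖U‖‖V‖)`, `α, β ∈ {−1,1}`, are zero. -/
theorem statement5 (P Q U V : Fin 3 → ℝ) (hPU : dot3 P U = 0) (hQV : dot3 Q V = 0)
    (c : ℝ) (hproper : norm3 P * norm3 Q ≠ 0 ∨ norm3 U * norm3 V ≠ 0) :
    (∃ lam : ℝ, lam ≠ 0 ∧
        (Mmat P Q U V c - lam • (1 : Matrix (Fin 4) (Fin 4) ℝ)).det = 0)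
    ∧ ¬ (∀ α ∈ ({-1, 1} : Set ℝ), ∀ β ∈ ({-1, 1} : Set ℝ),
          c - (α * (norm3 P * norm3 Q) + β * (norm3 U * norm3 V)) = 0) := by
  have hP2 := norm3_sq P
  have hQ2 := norm3_sq Q
  have hU2 := norm3_sq U
  have hV2 := norm3_sq V
  set a := norm3 P * norm3 Q with ha
  set b := norm3 U * norm3 V with hb
  have ha2 : a ^ 2 = (P 0^2+P 1^2+P 2^2)*(Q 0^2+Q 1^2+Q 2^2) := by
    rw [ha, mul_pow, hP2, hQ2]
  have hb2 : b ^ 2 = (U 0^2+U 1^2+U 2^2)*(V 0^2+V 1^2+V 2^2) := by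
    rw [hb, mul_pow, hU2, hV2]
  have hdet : ∀ lam : ℝ, (Mmat P Q U V c - lam • (1 : Matrix (Fin 4) (Fin 4) ℝ)).det =
      (c - lam)^4 - 2*(c - lam)^2 * (a^2 + b^2) + (a^2 - b^2)^2 := by
    intro lam
    rw [key_det P Q U V hPU hQV c lam, ha2, hb2]
  have ha0 : 0 ≤ a := mul_nonneg (norm3_nonneg P) (norm3_nonneg Q)
  have hb0 : 0 ≤ b := mul_nonneg (norm3_nonneg U) (norm3_nonneg V)
  have hab : a + b ≠ 0 := by
    rcases hproper with h | h
    · intro h0; exact h (le_antisymm (by linarith) ha0)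
    · intro h0; exact h (le_antisymm (by linarith) hb0)
  constructor
  · by_cases hc : c + (a + b) = 0
    · refine ⟨c - (a + b), ?_, ?_⟩
      · intro h0
        apply hab; linarith
      · rw [hdet]; ring
    · exact ⟨c + (a + b), hc, by rw [hdet]; ring⟩
  · intro h
    have h1 := h 1 (by simp) 1 (by simp)
    have h2 := h (-1) (by simp) (-1) (by simp)
    apply hab; linarith
end
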